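/- arXiv:1502.02177 — 9 statements merged into one kernel-verified Lean document; each statement's English description precedes it below -/
import Mathlib

section
/- For integers t > 1, k ≥ 1, and n ≥ 2k, if an n-vertex k-uniform hypergraph H has at least t·C(n-1, k-1) edges, then H contains a matching of size max{2, ⌈t/k⌉}. -/
/-!
Take a maximum matching `M` of `H`. By maximality every edge of `H` meets one of the at most
`k * #M` vertices covered by `M`, and each vertex lies in at most `C(n-1, k-1)` edges, so
`t * C(n-1, k-1) ≤ #H ≤ k * #M * C(n-1, k-1)`, i.e. `#M ≥ ⌈t/k⌉`. If `#M ≤ 1`, then `H` is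
intersecting and the Erdős–Ko–Rado theorem gives `#H ≤ C(n-1, k-1) < t * C(n-1, k-1)`.
-/

open Finset

section Matching

variable {β : Type*} [SemilatticeInf β] [OrderBot β]

theorem Finset.exists_maximum_pairwise_disjoint_subset (H : Finset β) :
    ∃ M ⊆ H, (M : Set β).Pairwise Disjoint ∧
      ∀ M' ⊆ H, (M' : Set β).Pairwise Disjoint → #M' ≤ #M := by
  classical
  obtain ⟨M, hM, hmax⟩ := exists_max_image
    {M ∈ H.powerset | ((M : Finset β) : Set β).Pairwise Disjoint} card ⟨∅, by simp⟩
  simp only [mem_filter, mem_powerset] at hM hmax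
  exact ⟨M, hM.1, hM.2, fun M' hM'H hM' => hmax M' ⟨hM'H, hM'⟩⟩

variable [DecidableEq β] {H M : Finset β}

theorem Finset.exists_not_disjoint_of_maximum_pairwise_disjoint (hH : ⊥ ∉ H) (hMH : M ⊆ H)
    (hM : (M : Set β).Pairwise Disjoint)
    (hmax : ∀ M' ⊆ H, (M' : Set β).Pairwise Disjoint → #M' ≤ #M) :
    ∀ e ∈ H, ∃ f ∈ M, ¬ Disjoint e f := by
  by_contra! ⟨e, he, hdisj⟩
  have heM : e ∉ M := fun heM => hH (disjoint_self.1 (hdisj e heM) ▸ he)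
  have hinsert : (insert e M : Set β).Pairwise Disjoint :=
    Set.pairwise_insert_of_symm.2 ⟨hM, fun f hf _ => hdisj f hf⟩
  have := hmax (insert e M) (insert_subset he hMH) (by rwa [coe_insert])
  rw [card_insert_of_notMem heM] at this
  omega

theorem Finset.intersecting_of_forall_pairwise_disjoint_card_le_one (hH : ⊥ ∉ H)
    (h : ∀ M ⊆ H, (M : Set β).Pairwise Disjoint → #M ≤ 1) : (H : Set β).Intersecting := by
  intro a ha b hb hab
  have hne : a ≠ b := by
    rintro rfl
    exact hH (disjoint_self.1 hab ▸ ha)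
  have := h {a, b} (insert_subset ha (singleton_subset_iff.2 hb))
    (by rw [coe_pair]; exact Set.pairwise_pair_of_symm.2 fun _ => hab)
  rw [card_pair hne] at this
  omega

end Matching

section Uniform

variable {α : Type*} [Fintype α] [DecidableEq α] {k : ℕ}

theorem Finset.card_filter_mem_le_choose {H : Finset (Finset α)} (hH : ∀ e ∈ H, #e = k)
    (v : α) : #{e ∈ H | v ∈ e} ≤ (Fintype.card α - 1).choose (k - 1) := by
  calc #{e ∈ H | v ∈ e} ≤ #((univ.erase v).powersetCard (k - 1)) := by
        refine card_le_card_of_injOn (fun e => e.erase v) (fun e he => ?_) (fun a ha b hb hab => ?_)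
        · rw [mem_coe, mem_filter] at he
          rw [mem_coe, mem_powersetCard, card_erase_of_mem he.2, hH e he.1]
          exact ⟨erase_subset_erase v (subset_univ e), rfl⟩
        · rw [mem_coe, mem_filter] at ha hb
          rw [← insert_erase ha.2, ← insert_erase hb.2]
          exact congrArg (insert v) hab
    _ = (Fintype.card α - 1).choose (k - 1) := by
        rw [card_powersetCard, card_erase_of_mem (mem_univ v), card_univ]

theorem Finset.card_le_card_mul_mul_choose_of_forall_not_disjoint {H M : Finset (Finset α)}
    (hH : ∀ e ∈ H, #e = k) (hM : ∀ f ∈ M, #f ≤ k) (hcover : ∀ e ∈ H, ∃ f ∈ M, ¬ Disjoint e f) :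
    #H ≤ #M * k * (Fintype.card α - 1).choose (k - 1) := by
  have hsub : H ⊆ (M.biUnion id).biUnion fun v => {e ∈ H | v ∈ e} := by
    intro e he
    obtain ⟨f, hf, v, hve, hvf⟩ := (hcover e he).imp fun f => And.imp_right not_disjoint_iff.1
    exact mem_biUnion.2 ⟨v, mem_biUnion.2 ⟨f, hf, hvf⟩, mem_filter.2 ⟨he, hve⟩⟩
  calc #H ≤ #(M.biUnion id) * (Fintype.card α - 1).choose (k - 1) :=
        (card_le_card hsub).trans
          (card_biUnion_le_card_mul _ _ _ fun v _ => card_filter_mem_le_choose hH v)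
    _ ≤ #M * k * (Fintype.card α - 1).choose (k - 1) :=
        Nat.mul_le_mul_right _ (card_biUnion_le_card_mul _ _ _ hM)

theorem Finset.card_le_choose_of_intersecting {H : Finset (Finset α)}
    (hint : (H : Set (Finset α)).Intersecting) (hH : ∀ e ∈ H, #e = k)
    (hk : 2 * k ≤ Fintype.card α) : #H ≤ (Fintype.card α - 1).choose (k - 1) := by
  let f := (mapEmbedding (Fintype.equivFin α).toEmbedding).toEmbedding
  have hint' : (H.map f : Set (Finset (Fin (Fintype.card α)))).Intersecting := by
    simp only [coe_map, Set.Intersecting, Set.mem_image, mem_coe]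
    rintro _ ⟨a, ha, rfl⟩ _ ⟨b, hb, rfl⟩
    simpa [f, disjoint_map] using hint ha hb
  have hsized : (H.map f : Set (Finset (Fin (Fintype.card α)))).Sized k := by
    simp only [coe_map, Set.Sized, Set.mem_image, mem_coe]
    rintro _ ⟨a, ha, rfl⟩
    simpa [f] using hH a ha
  simpa using erdos_ko_rado hint' hsized (by omega)

end Uniform

/-- For integers t > 1, k ≥ 1, and n ≥ 2k, if an n-vertex k-uniform
hypergraph H has at least t·C(n-1, k-1) edges, then H contains a matching of size
max {2, ⌈t/k⌉}. -/
theorem stmt_0 {α : Type*} [Fintype α] [DecidableEq α] (t k : ℕ) (ht : 1 < t) (hk : 1 ≤ k)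
    (hn : 2 * k ≤ Fintype.card α)
    (H : Finset (Finset α)) (hunif : ∀ e ∈ H, e.card = k)
    (hcard : t * (Fintype.card α - 1).choose (k - 1) ≤ H.card) :
    ∃ M ⊆ H, M.card = max 2 ((t + k - 1) / k) ∧
      (↑M : Set (Finset α)).Pairwise Disjoint := by
  have hC : 0 < (Fintype.card α - 1).choose (k - 1) := Nat.choose_pos (by omega)
  have hH : ⊥ ∉ H := fun h => by
    have := hunif ⊥ h
    rw [bot_eq_empty, card_empty] at this
    omega
  obtain ⟨M, hMH, hM, hmax⟩ := H.exists_maximum_pairwise_disjoint_subset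
  have htwo : 2 ≤ #M := by
    by_contra! hM1
    have hint := intersecting_of_forall_pairwise_disjoint_card_le_one hH
      fun M' hM'H hM' => (hmax M' hM'H hM').trans (by omega)
    have := card_le_choose_of_intersecting hint hunif hn
    nlinarith
  have hceil : (t + k - 1) / k ≤ #M := by
    have hcover := card_le_card_mul_mul_choose_of_forall_not_disjoint hunif
      (fun f hf => (hunif f (hMH hf)).le)
      (exists_not_disjoint_of_maximum_pairwise_disjoint hH hMH hM hmax)
    have : t ≤ #M * k := Nat.le_of_mul_le_mul_right (hcard.trans hcover) hC
    rw [Nat.div_le_iff_le_mul_add_pred hk, mul_comm]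
    omega
  obtain ⟨M', hM'M, hM'card⟩ := exists_subset_card_eq (max_le htwo hceil)
  exact ⟨M', hM'M.trans hMH, hM'card, hM.mono (coe_subset.2 hM'M)⟩
end

section
/- Let r, k', k be positive integers with k = r·k', and let B be a family of k'-element subsets of [k] = {1, …, k} such that for every partition of [k] into r parts each of size k', at least one part belongs to B. Then |B| ≥ (1/r)·C(k, k'). -/
/-!
Let `σ` range over all permutations of `[k]`. Each `σ` carries a fixed equipartition
`P₁, …, P_r` to an equipartition, so some `σ(Pᵢ)` lies in `B`: the `k!` permutations are covered
by the `r · |B|` sets `{σ | σ(Pᵢ) = S}` with `S ∈ B`. As permutations act transitively on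
`k'`-sets, each of these sets has exactly `k! / C(k, k')` elements, whence `C(k, k') ≤ r · |B|`.
-/

open Equiv Finset
open scoped Pointwise

namespace MulAction

variable {G X : Type*} [Group G] [Fintype G] [MulAction G X] [Fintype X] [DecidableEq X]

theorem card_filter_smul_eq_mul_card [IsPretransitive G X] (x y : X) :
    #{g : G | g • x = y} * Fintype.card X = Fintype.card G := by
  have hconst : ∀ y, #{g : G | g • x = y} = #{g : G | g • x = x} := by
    intro y
    obtain ⟨τ, rfl⟩ := exists_smul_eq G x y
    refine card_nbij' (τ⁻¹ * ·) (τ * ·) ?_ ?_ ?_ ?_ <;> intro g <;>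
      simp [mul_smul, inv_smul_eq_iff]
  calc #{g : G | g • x = y} * Fintype.card X
      = ∑ y : X, #{g : G | g • x = y} := by simp [hconst, mul_comm]
    _ = Fintype.card G := (card_eq_sum_card_fiberwise fun g _ => mem_univ (g • x)).symm

theorem card_filter_smul_mem_mul_card [IsPretransitive G X] (x : X) (B : Finset X) :
    #{g : G | g • x ∈ B} * Fintype.card X = #B * Fintype.card G := by
  have hsum : #{g : G | g • x ∈ B} = ∑ y ∈ B, #{g : G | g • x = y} := by
    refine (card_eq_sum_card_fiberwise (f := (· • x)) fun g hg => (mem_filter.1 hg).2).trans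
      (sum_congr rfl fun y hy => ?_)
    congr 1
    ext g
    simp +contextual [hy]
  simp only [hsum, sum_mul, card_filter_smul_eq_mul_card, sum_const, smul_eq_mul]

end MulAction

theorem choose_le_card_mul_card_of_forall_perm_smul_mem {α ι : Type*} [Fintype α]
    [DecidableEq α] [Fintype ι] {n : ℕ} (P : ι → Finset α) (hP : ∀ i, #(P i) = n)
    (B : Finset (Finset α)) (hB : ∀ σ : Perm α, ∃ i, σ • P i ∈ B) :
    (Fintype.card α).choose n ≤ Fintype.card ι * #B := by
  have := Set.powersetCard.isPretransitive (α := α) (n := n)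
  let Pn (i : ι) : Set.powersetCard α n := Set.powersetCard.ofCard (hP i)
  let Bn : Finset (Set.powersetCard α n) := {s | (s : Finset α) ∈ B}
  have hcard : Fintype.card (Set.powersetCard α n) = (Fintype.card α).choose n := by
    rw [← Nat.card_eq_fintype_card, Set.powersetCard.card, Nat.card_eq_fintype_card]
  have hcover : (Fintype.card α).factorial ≤ ∑ i, #{σ : Perm α | σ • Pn i ∈ Bn} := by
    rw [← Fintype.card_perm, ← card_univ]
    refine (card_le_card fun σ _ => ?_).trans card_biUnion_le
    obtain ⟨i, hi⟩ := hB σ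
    simpa [Bn, Pn] using ⟨i, hi⟩
  have hBn : #Bn ≤ #B :=
    card_le_card_of_injOn (↑) (fun s hs => (mem_filter.1 hs).2) Subtype.val_injective.injOn
  refine Nat.le_of_mul_le_mul_right ?_ (Nat.factorial_pos (Fintype.card α))
  calc (Fintype.card α).choose n * (Fintype.card α).factorial
      ≤ ∑ i, #{σ : Perm α | σ • Pn i ∈ Bn} * Fintype.card (Set.powersetCard α n) := by
        rw [← sum_mul, hcard, mul_comm]; gcongr
    _ = Fintype.card ι * #Bn * (Fintype.card α).factorial := by
        simp only [MulAction.card_filter_smul_mem_mul_card, Fintype.card_perm, sum_const,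
          card_univ, smul_eq_mul, mul_assoc]
    _ ≤ Fintype.card ι * #B * (Fintype.card α).factorial := by gcongr

section finBlock

variable {r n : ℕ}

def finBlock (r n : ℕ) (i : Fin r) : Finset (Fin (r * n)) :=
  ({i} ×ˢ univ).map finProdFinEquiv.toEmbedding

theorem mem_finBlock {i : Fin r} {x : Fin (r * n)} :
    x ∈ finBlock r n i ↔ x.divNat = i := by
  simp [finBlock, mem_map_equiv, eq_comm]

theorem card_finBlock (i : Fin r) : #(finBlock r n i) = n := by
  simp [finBlock]

theorem pairwise_disjoint_finBlock : Pairwise (Function.onFun Disjoint (finBlock r n)) := by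
  intro i j hij
  refine disjoint_left.2 fun x hi hj => hij ?_
  rw [← mem_finBlock.1 hi, ← mem_finBlock.1 hj]

theorem biUnion_finBlock : univ.biUnion (finBlock r n) = univ :=
  eq_univ_of_forall fun x => mem_biUnion.2 ⟨x.divNat, mem_univ _, mem_finBlock.2 rfl⟩

end finBlock

theorem stmt_1_general (r k' k : ℕ) (hk : k = r * k')
    (B : Finset (Finset (Fin k)))
    (hpart : ∀ A : Fin r → Finset (Fin k),
      (∀ i, (A i).card = k') → Pairwise (Function.onFun Disjoint A) →
      Finset.univ.biUnion A = Finset.univ → ∃ i, A i ∈ B) :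
    k.choose k' ≤ r * B.card := by
  subst hk
  have hcover (σ : Perm (Fin (r * k'))) : ∃ i, σ • finBlock r k' i ∈ B := by
    refine hpart _ (fun i => by rw [card_smul_finset, card_finBlock]) (fun i j hij => ?_) ?_
    · simpa [Function.onFun, ← disjoint_coe, Set.disjoint_smul_set]
        using pairwise_disjoint_finBlock hij
    · exact eq_univ_of_forall fun x =>
        mem_biUnion.2 ⟨(σ⁻¹ • x).divNat, mem_univ _, inv_smul_mem_iff.1 (mem_finBlock.2 rfl)⟩
  simpa using choose_le_card_mul_card_of_forall_perm_smul_mem _ (fun _ => card_finBlock _) B hcover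

/-- Let r, k', k be positive integers with k = r·k', and let B be a family of
k'-element subsets of [k] such that for every partition of [k] into r parts each of size k',
at least one part belongs to B. Then |B| ≥ (1/r)·C(k, k'). -/
theorem stmt_1 (r k' k : ℕ) (hr : 0 < r) (hk' : 0 < k') (hk : k = r * k')
    (B : Finset (Finset (Fin k))) (hB : ∀ e ∈ B, e.card = k')
    (hpart : ∀ A : Fin r → Finset (Fin k),
      (∀ i, (A i).card = k') → Pairwise (Function.onFun Disjoint A) →
      Finset.univ.biUnion A = Finset.univ → ∃ i, A i ∈ B) :
    k.choose k' ≤ r * B.card :=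
  stmt_1_general r k' k hk B hpart
end

section
/- The hypergraph H(k, ℓ) contains 2^ℓ pairwise edge-disjoint matchings of size 2, each of which covers the entire vertex set V(H(k, ℓ)). -/
/-- Vertex set of the hypergraph H(k, ℓ): two stationary parts A, B of size k-ℓ
and dynamic vertices u₁,…,u_ℓ (left) and v₁,…,v_ℓ (right). -/
abbrev HklVertex (k ℓ : ℕ) := (Fin (k - ℓ) ⊕ Fin (k - ℓ)) ⊕ (Fin ℓ ⊕ Fin ℓ)

/-- The stationary part A of H(k, ℓ). -/
def hklA (k ℓ : ℕ) : Finset (HklVertex k ℓ) :=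
  Finset.univ.image (fun i : Fin (k - ℓ) => Sum.inl (Sum.inl i))

/-- The stationary part B of H(k, ℓ). -/
def hklB (k ℓ : ℕ) : Finset (HklVertex k ℓ) :=
  Finset.univ.image (fun i : Fin (k - ℓ) => Sum.inl (Sum.inr i))

/-- The hypergraph H(k, ℓ): edges are Z ∪ {one of u_i, v_i for each i ≤ ℓ}
with Z ∈ {A, B}. -/
def hkl (k ℓ : ℕ) : Finset (Finset (HklVertex k ℓ)) :=
  Finset.univ.image (fun p : Bool × (Fin ℓ → Bool) =>
    (if p.1 then hklA k ℓ else hklB k ℓ) ∪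
      Finset.univ.image (fun i : Fin ℓ =>
        Sum.inr (if p.2 i then Sum.inl i else Sum.inr i)))

/-- The edge of H(k,ℓ) given by a choice of side and a boolean vector. -/
def hklE (k ℓ : ℕ) (p : Bool × (Fin ℓ → Bool)) : Finset (HklVertex k ℓ) :=
  (if p.1 then hklA k ℓ else hklB k ℓ) ∪
    Finset.univ.image (fun i : Fin ℓ =>
      Sum.inr (if p.2 i then Sum.inl i else Sum.inr i))

lemma hklE_mem_hkl (k ℓ : ℕ) (p : Bool × (Fin ℓ → Bool)) : hklE k ℓ p ∈ hkl k ℓ := by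
  exact Finset.mem_image_of_mem _ (Finset.mem_univ p)

lemma mem_hklE_inl (k ℓ : ℕ) (p : Bool × (Fin ℓ → Bool)) (j : Fin (k - ℓ)) :
    ((Sum.inl (Sum.inl j) : HklVertex k ℓ) ∈ hklE k ℓ p) ↔ p.1 = true := by
  cases h : p.1 <;> simp [hklE, hklA, hklB, h]

lemma mem_hklE_inr (k ℓ : ℕ) (p : Bool × (Fin ℓ → Bool)) (j : Fin (k - ℓ)) :
    ((Sum.inl (Sum.inr j) : HklVertex k ℓ) ∈ hklE k ℓ p) ↔ p.1 = false := by
  cases h : p.1 <;> simp [hklE, hklA, hklB, h]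

lemma mem_hklE_u (k ℓ : ℕ) (p : Bool × (Fin ℓ → Bool)) (i : Fin ℓ) :
    ((Sum.inr (Sum.inl i) : HklVertex k ℓ) ∈ hklE k ℓ p) ↔ p.2 i = true := by
  simp only [hklE, Finset.mem_union, Finset.mem_image, Finset.mem_univ, true_and]
  constructor
  · rintro (h | ⟨a, ha⟩)
    · exact absurd h (by cases hp : p.1 <;> simp [hp, hklA, hklB])
    · by_cases hb : p.2 a
      · simp [hb] at ha; cases ha; exact hb
      · simp [hb] at ha
  · intro h; right; exact ⟨i, by simp [h]⟩

lemma mem_hklE_v (k ℓ : ℕ) (p : Bool × (Fin ℓ → Bool)) (i : Fin ℓ) :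
    ((Sum.inr (Sum.inr i) : HklVertex k ℓ) ∈ hklE k ℓ p) ↔ p.2 i = false := by
  simp only [hklE, Finset.mem_union, Finset.mem_image, Finset.mem_univ, true_and]
  constructor
  · rintro (h | ⟨a, ha⟩)
    · exact absurd h (by cases hp : p.1 <;> simp [hp, hklA, hklB])
    · by_cases hb : p.2 a
      · simp [hb] at ha
      · simp [hb] at ha; cases ha; simpa using hb
  · intro h; right; exact ⟨i, by simp [h]⟩

lemma hklE_injective (k ℓ : ℕ) (hℓk : ℓ < k) :
    Function.Injective (hklE k ℓ) := by
  have hpos : 0 < k - ℓ := Nat.sub_pos_of_lt hℓk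
  intro p q h
  have h1 : p.1 = q.1 := by
    rw [Bool.eq_iff_iff, ← mem_hklE_inl k ℓ p ⟨0, hpos⟩, ← mem_hklE_inl k ℓ q ⟨0, hpos⟩, h]
  have h2 : p.2 = q.2 := by
    funext i
    rw [Bool.eq_iff_iff, ← mem_hklE_u k ℓ p i, ← mem_hklE_u k ℓ q i, h]
  exact Prod.ext h1 h2

lemma hklE_disj (k ℓ : ℕ) (f : Fin ℓ → Bool) :
    Disjoint (hklE k ℓ (true, f)) (hklE k ℓ (false, fun i => ! f i)) := by
  rw [Finset.disjoint_left]
  rintro ((j | j) | (i | i)) ha hb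
  · rw [mem_hklE_inl] at hb; simp at hb
  · rw [mem_hklE_inr] at ha; simp at ha
  · rw [mem_hklE_u] at ha hb; simp_all
  · rw [mem_hklE_v] at ha hb; simp_all

lemma hklE_cover (k ℓ : ℕ) (f : Fin ℓ → Bool) (x : HklVertex k ℓ) :
    x ∈ hklE k ℓ (true, f) ∪ hklE k ℓ (false, fun i => ! f i) := by
  rw [Finset.mem_union]
  rcases x with (j | j) | (i | i)
  · left; rw [mem_hklE_inl]
  · right; rw [mem_hklE_inr]
  · cases h : f i
    · right; rw [mem_hklE_u]; simp [h]
    · left; rw [mem_hklE_u]; exact h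
  · cases h : f i
    · left; rw [mem_hklE_v]; exact h
    · right; rw [mem_hklE_v]; simp [h]

/-- H(k, ℓ) contains 2^ℓ pairwise edge-disjoint matchings of size 2,
each covering the entire vertex set of H(k, ℓ). -/
theorem stmt_5 (k ℓ : ℕ) (hℓk : ℓ < k) :
    ∃ M : Fin (2 ^ ℓ) → Finset (Finset (HklVertex k ℓ)),
      (∀ i, M i ⊆ hkl k ℓ ∧ (M i).card = 2 ∧
        (↑(M i) : Set (Finset (HklVertex k ℓ))).Pairwise Disjoint ∧
        (M i).biUnion id = Finset.univ) ∧
      ∀ i j, i ≠ j → Disjoint (M i) (M j) := by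
  have hinj := hklE_injective k ℓ hℓk
  have e : (Fin ℓ → Bool) ≃ Fin (2 ^ ℓ) :=
    Fintype.equivFinOfCardEq (by simp)
  refine ⟨fun i => {hklE k ℓ (true, e.symm i), hklE k ℓ (false, fun j => ! e.symm i j)}, ?_, ?_⟩
  · intro i
    have hne : hklE k ℓ (true, e.symm i) ≠ hklE k ℓ (false, fun j => ! e.symm i j) := by
      intro h
      have := hinj h
      simpa using congrArg Prod.fst this
    refine ⟨?_, ?_, ?_, ?_⟩
    · intro s hs
      simp only [Finset.mem_insert, Finset.mem_singleton] at hs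
      rcases hs with h | h <;> rw [h] <;> exact hklE_mem_hkl k ℓ _
    · rw [Finset.card_insert_of_notMem (by simpa using hne)]; simp
    · intro a ha b hb hab
      simp only [Finset.coe_insert, Finset.coe_singleton, Set.mem_insert_iff,
        Set.mem_singleton_iff] at ha hb
      rcases ha with ha | ha <;> rcases hb with hb | hb <;> subst ha <;> subst hb
      · exact absurd rfl hab
      · exact hklE_disj k ℓ _
      · exact (hklE_disj k ℓ _).symm
      · exact absurd rfl hab
    · ext x
      simp only [Finset.mem_biUnion, Finset.mem_insert, Finset.mem_singleton, id,
        Finset.mem_univ, iff_true]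
      have := hklE_cover k ℓ (e.symm i) x
      rw [Finset.mem_union] at this
      rcases this with h | h
      · exact ⟨_, Or.inl rfl, h⟩
      · exact ⟨_, Or.inr rfl, h⟩
  · intro i j hij
    rw [Finset.disjoint_left]
    intro s hs ht
    simp only [Finset.mem_insert, Finset.mem_singleton] at hs ht
    have hij' : e.symm i ≠ e.symm j := fun h => hij (e.symm.injective h)
    rcases hs with h | h <;> rcases ht with h' | h' <;> rw [h] at h'
    · exact hij' (congrArg Prod.snd (hinj h'))
    · simpa using congrArg Prod.fst (hinj h')
    · simpa using congrArg Prod.fst (hinj h')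
    · apply hij'
      have := congrArg Prod.snd (hinj h')
      funext a
      have := congrFun this a
      simp at this
      exact this
end

section
/- For integers c > 1 and k ≥ 2, let H be the n-vertex k-uniform hypergraph on vertex set V with distinguished vertices x₁, …, x_c whose edges are all k-sets e with |e ∩ {x₁, …, x_c}| = 1. Then H has exactly c·C(n-c, k-1) edges and H contains no r-regular subgraph for any r > c·C(c(k-1), k-2). -/
/-!
Splitting an edge into its unique vertex in `X` and its `k - 1` vertices outside `X` counts
the edges. For an `r`-regular subgraph with span `W`, counting incidences with `W` and with
`W ∩ X` gives `#(W \ X) = #(W ∩ X) * (k - 1) ≤ c * (k - 1)`. The edges through one vertex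
`x ∈ W ∩ X` are determined by their parts in `W \ X`, so
`r ≤ C(c(k-1), k-1) ≤ c * C(c(k-1), k-2)`.
-/

/-- A hypergraph `H` has an `r`-regular subgraph if some nonempty collection of its
edges covers every vertex of its span exactly `r` times. -/
def HasRegularSubgraph {α : Type*} [DecidableEq α] (H : Finset (Finset α)) (r : ℕ) : Prop :=
  ∃ R : Finset (Finset α), R ⊆ H ∧ R.Nonempty ∧
    ∀ v ∈ R.biUnion id, (R.filter (fun e => v ∈ e)).card = r

open Finset

theorem Nat.choose_mul_succ_le_mul_choose (c m : ℕ) :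
    (c * (m + 1)).choose (m + 1) ≤ c * (c * (m + 1)).choose m := by
  refine Nat.le_of_mul_le_mul_right ?_ m.succ_pos
  calc (c * (m + 1)).choose (m + 1) * (m + 1)
      = (c * (m + 1)).choose m * (c * (m + 1) - m) := Nat.choose_succ_right_eq _ _
    _ ≤ (c * (m + 1)).choose m * (c * (m + 1)) := Nat.mul_le_mul_left _ (Nat.sub_le _ _)
    _ = c * (c * (m + 1)).choose m * (m + 1) := by ring

section

variable {α : Type*} [DecidableEq α]

theorem union_inter_eq_and_union_sdiff_eq {A B X : Finset α} (hA : A ⊆ X)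
    (hB : Disjoint B X) : (A ∪ B) ∩ X = A ∧ (A ∪ B) \ X = B := by
  constructor
  · rw [union_inter_distrib_right, inter_eq_left.2 hA, disjoint_iff_inter_eq_empty.1 hB,
      union_empty]
  · rw [union_sdiff_distrib, sdiff_eq_empty_iff_subset.2 hA, empty_union,
      sdiff_eq_self_of_disjoint hB]

theorem card_filter_powersetCard_card_inter_eq (s X : Finset α) {j k : ℕ} (hjk : j ≤ k) :
    #{e ∈ s.powersetCard k | #(e ∩ X) = j} =
      (#(s ∩ X)).choose j * (#(s \ X)).choose (k - j) := by
  rw [← card_powersetCard, ← card_powersetCard, ← card_product]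
  refine card_nbij' (fun e ↦ (e ∩ X, e \ X)) (fun p ↦ p.1 ∪ p.2) ?_ ?_ ?_ ?_
  · intro e he
    simp only [mem_coe, mem_filter, mem_powersetCard] at he
    obtain ⟨⟨hes, hek⟩, hej⟩ := he
    have := card_inter_add_card_sdiff e X
    simp only [mem_coe, mem_product, mem_powersetCard]
    exact ⟨⟨inter_subset_inter_right hes, hej⟩, sdiff_subset_sdiff hes le_rfl, by omega⟩
  · rintro ⟨A, B⟩ hAB
    simp only [mem_coe, mem_product, mem_powersetCard] at hAB
    obtain ⟨⟨hAs, hAj⟩, hBs, hBk⟩ := hAB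
    have hAX : A ⊆ X := hAs.trans inter_subset_right
    have hBX : Disjoint B X := disjoint_of_subset_left hBs sdiff_disjoint
    simp only [mem_coe, mem_filter, mem_powersetCard,
      (union_inter_eq_and_union_sdiff_eq hAX hBX).1]
    refine ⟨⟨union_subset (hAs.trans inter_subset_left) (hBs.trans sdiff_subset), ?_⟩, hAj⟩
    rw [card_union_of_disjoint (disjoint_of_subset_left hAX hBX.symm), hAj, hBk]
    omega
  · intro e _
    exact sup_inf_sdiff e X
  · rintro ⟨A, B⟩ hAB
    simp only [mem_coe, mem_product, mem_powersetCard] at hAB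
    obtain ⟨⟨hAs, -⟩, hBs, -⟩ := hAB
    exact Prod.ext_iff.2 (union_inter_eq_and_union_sdiff_eq
      (hAs.trans inter_subset_right) (disjoint_of_subset_left hBs sdiff_disjoint))

def IsRegularOfDegree (R : Finset (Finset α)) (r : ℕ) : Prop :=
  ∀ v ∈ R.biUnion id, #{e ∈ R | v ∈ e} = r

theorem subset_biUnion_id {R : Finset (Finset α)} {e : Finset α} (he : e ∈ R) :
    e ⊆ R.biUnion id :=
  subset_biUnion_of_mem id he

variable {R : Finset (Finset α)} {r k : ℕ} {X : Finset α}

theorem IsRegularOfDegree.sum_card_inter (hR : IsRegularOfDegree R r) (A : Finset α) :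
    ∑ e ∈ R, #(e ∩ A) = #(R.biUnion id ∩ A) * r := by
  rw [← Finset.sum_card_inter (s := R.biUnion id ∩ A)
    fun v hv ↦ hR v (mem_of_mem_inter_left hv)]
  refine sum_congr rfl fun e he ↦ ?_
  rw [inter_right_comm, inter_eq_right.2 (subset_biUnion_id he)]

theorem IsRegularOfDegree.card_sdiff_eq (hR : IsRegularOfDegree R r) (hr : 0 < r)
    (hedge : ∀ e ∈ R, #e = k ∧ #(e ∩ X) = 1) :
    #(R.biUnion id \ X) = #(R.biUnion id ∩ X) * (k - 1) := by
  set W := R.biUnion id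
  have hW : #R * k = #W * r := by
    rw [← inter_self W, ← hR.sum_card_inter W, ← smul_eq_mul, ← sum_const]
    exact sum_congr rfl fun e he ↦ by
      rw [inter_eq_left.2 (subset_biUnion_id he), (hedge e he).1]
  have hWX : #R = #(W ∩ X) * r := by
    rw [← hR.sum_card_inter X, sum_congr rfl fun e he ↦ (hedge e he).2]
    exact card_eq_sum_ones R
  refine Nat.eq_of_mul_eq_mul_right hr ?_
  calc #(W \ X) * r = #W * r - #(W ∩ X) * r := by
        rw [← card_inter_add_card_sdiff W X, add_mul, Nat.add_sub_cancel_left]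
    _ = #R * (k - 1) := by rw [← hW, ← hWX, Nat.mul_sub_one]
    _ = #(W ∩ X) * (k - 1) * r := by rw [hWX]; ring

theorem card_filter_mem_le_choose (hedge : ∀ e ∈ R, #e = k ∧ #(e ∩ X) = 1) {x : α}
    (hx : x ∈ X) : #{e ∈ R | x ∈ e} ≤ (#(R.biUnion id \ X)).choose (k - 1) := by
  rw [← card_powersetCard]
  have key : ∀ e ∈ R, x ∈ e → e ∩ X = {x} := fun e he hxe ↦ by
    obtain ⟨a, ha⟩ := card_eq_one.1 (hedge e he).2
    rwa [ha, singleton_inj, eq_comm, ← mem_singleton, ← ha, mem_inter, and_iff_left hx]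
  refine card_le_card_of_injOn (· \ X) (fun e he ↦ ?_) (fun e he f hf hef ↦ ?_)
  · obtain ⟨heR, -⟩ := mem_filter.1 he
    have hcard := card_inter_add_card_sdiff e X
    rw [(hedge e heR).1, (hedge e heR).2] at hcard
    exact mem_powersetCard.2
      ⟨sdiff_subset_sdiff (subset_biUnion_id heR) le_rfl, show #(e \ X) = k - 1 by omega⟩
  · obtain ⟨heR, hxe⟩ := mem_filter.1 he
    obtain ⟨hfR, hxf⟩ := mem_filter.1 hf
    calc e = e ∩ X ∪ e \ X := (sup_inf_sdiff e X).symm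
      _ = f ∩ X ∪ f \ X := by rw [key e heR hxe, key f hfR hxf]; exact congrArg _ hef
      _ = f := sup_inf_sdiff f X

theorem IsRegularOfDegree.le_choose (hR : IsRegularOfDegree R r) (hne : R.Nonempty)
    (hedge : ∀ e ∈ R, #e = k ∧ #(e ∩ X) = 1) : r ≤ (#X * (k - 1)).choose (k - 1) := by
  rcases Nat.eq_zero_or_pos r with rfl | hr
  · exact Nat.zero_le _
  obtain ⟨e, he⟩ := hne
  obtain ⟨x, hx⟩ := card_pos.1 ((hedge e he).2.symm ▸ Nat.one_pos)
  obtain ⟨hxe, hxX⟩ := mem_inter.1 hx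
  have hspan : #(R.biUnion id \ X) ≤ #X * (k - 1) := by
    rw [hR.card_sdiff_eq hr hedge]
    exact Nat.mul_le_mul_right _ (card_le_card inter_subset_right)
  calc r = #{e ∈ R | x ∈ e} := (hR x (mem_biUnion.2 ⟨e, he, hxe⟩)).symm
    _ ≤ (#(R.biUnion id \ X)).choose (k - 1) := card_filter_mem_le_choose hedge hxX
    _ ≤ (#X * (k - 1)).choose (k - 1) := Nat.choose_le_choose _ hspan

end

theorem stmt_9_general {α : Type*} [Fintype α] [DecidableEq α] (c k : ℕ) (hk : 2 ≤ k)
    (X : Finset α) (hX : X.card = c) :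
    ((Finset.univ.powersetCard k).filter (fun e => (e ∩ X).card = 1)).card =
        c * (Fintype.card α - c).choose (k - 1) ∧
    ∀ r : ℕ, c * ((c * (k - 1)).choose (k - 2)) < r →
      ¬ HasRegularSubgraph
          ((Finset.univ.powersetCard k).filter (fun e => (e ∩ X).card = 1)) r := by
  refine ⟨?_, ?_⟩
  · rw [card_filter_powersetCard_card_inter_eq _ _ (by omega : 1 ≤ k), univ_inter,
      ← compl_eq_univ_sdiff, card_compl, hX, Nat.choose_one_right]
  · rintro r hr ⟨R, hRH, hne, hR⟩
    have hedge : ∀ e ∈ R, #e = k ∧ #(e ∩ X) = 1 := fun e he ↦ by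
      simpa only [mem_filter, mem_powersetCard_univ] using hRH he
    obtain ⟨m, rfl⟩ : ∃ m, k = m + 2 := ⟨k - 2, by omega⟩
    have hr_le : r ≤ (c * (m + 1)).choose (m + 1) :=
      hX ▸ IsRegularOfDegree.le_choose hR hne hedge
    exact hr.not_ge (hr_le.trans (Nat.choose_mul_succ_le_mul_choose c m))

/-- For c > 1 and k ≥ 2, the n-vertex k-uniform hypergraph whose edges are
all k-sets meeting a fixed c-set X in exactly one vertex has exactly c·C(n-c, k-1) edges
and contains no r-regular subgraph for any r > c·C(c(k-1), k-2). -/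
theorem stmt_9 {α : Type*} [Fintype α] [DecidableEq α] (c k : ℕ) (hc : 1 < c) (hk : 2 ≤ k)
    (X : Finset α) (hX : X.card = c) :
    ((Finset.univ.powersetCard k).filter (fun e => (e ∩ X).card = 1)).card =
        c * (Fintype.card α - c).choose (k - 1) ∧
    ∀ r : ℕ, c * ((c * (k - 1)).choose (k - 2)) < r →
      ¬ HasRegularSubgraph
          ((Finset.univ.powersetCard k).filter (fun e => (e ∩ X).card = 1)) r :=
  stmt_9_general c k hk X hX
end

section
/- Every full k-star on n ≥ k + k/r vertices, together with any additional k-set e not containing the center, contains an r-regular subgraph, provided r divides k and r ≥ 2. -/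
open Finset

section

variable {α : Type*} [DecidableEq α]

theorem HasRegularSubgraph.mono {H H' : Finset (Finset α)} {r : ℕ} (hH : H ⊆ H')
    (h : HasRegularSubgraph H r) : HasRegularSubgraph H' r := by
  obtain ⟨R, hRH, hR⟩ := h
  exact ⟨R, hRH.trans hH, hR⟩

theorem Finset.exists_fiber_card_eq (e : Finset α) {r m : ℕ} (hr : 0 < r) (he : #e = r * m) :
    ∃ c : α → Fin r, ∀ j, #{x ∈ e | c x = j} = m := by
  let σ : e ≃ Fin r × Fin m := e.equivFin.trans ((finCongr he).trans finProdFinEquiv.symm)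
  let c : α → Fin r := fun x => if hx : x ∈ e then (σ ⟨x, hx⟩).1 else ⟨0, hr⟩
  refine ⟨c, fun j => ?_⟩
  have hc : ∀ x (hx : x ∈ e), c x = (σ ⟨x, hx⟩).1 := fun x hx => dif_pos hx
  calc #{x ∈ e | c x = j} = #(univ : Finset (Fin m)) := by
        refine card_bij' (fun x hx => (σ ⟨x, (mem_filter.1 hx).1⟩).2)
          (fun t _ => (σ.symm (j, t) : α)) ?_ ?_ ?_ ?_
        · simp
        · intro t _
          simp [hc]
        · intro x hx
          obtain ⟨hxe, rfl⟩ := mem_filter.1 hx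
          simp [hc x hxe]
        · intro t _
          simp
    _ = m := by simp

variable {r : ℕ} (v : α) (e g : Finset α) (c : α → Fin r)

def starEdge (j : Fin r) : Finset α := insert v ({x ∈ e | c x ≠ j} ∪ g)

variable {v e g c}

theorem mem_starEdge {w : α} {j : Fin r} :
    w ∈ starEdge v e g c j ↔ w = v ∨ (w ∈ e ∧ c w ≠ j) ∨ w ∈ g := by
  simp [starEdge]

theorem card_starEdge (hv : v ∉ e) (hvg : v ∉ g) (hge : Disjoint g e) (j : Fin r) :
    #(starEdge v e g c j) = #e - #{x ∈ e | c x = j} + #g + 1 := by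
  have hvs : v ∉ {x ∈ e | c x ≠ j} ∪ g := by simp [hv, hvg]
  have hdisj : Disjoint {x ∈ e | c x ≠ j} g := hge.symm.mono_left (filter_subset _ e)
  rw [starEdge, card_insert_of_notMem hvs, card_union_of_disjoint hdisj]
  have : #{x ∈ e | c x = j} + #{x ∈ e | c x ≠ j} = #e := card_filter_add_card_filter_not _
  omega

theorem starEdge_injective (hv : v ∉ e) (hge : Disjoint g e) (hc : ∀ j, ∃ x ∈ e, c x = j) :
    Function.Injective (starEdge v e g c) := by
  intro i j hij
  obtain ⟨x, hxe, rfl⟩ := hc i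
  by_contra hne
  have hx : x ∈ starEdge v e g c j := mem_starEdge.2 (Or.inr (Or.inl ⟨hxe, hne⟩))
  rw [← hij, mem_starEdge] at hx
  rcases hx with rfl | ⟨-, h⟩ | hxg
  · exact hv hxe
  · exact h rfl
  · exact disjoint_left.1 hge hxg hxe

theorem hasRegularSubgraph_starEdges (hv : v ∉ e) (hge : Disjoint g e)
    (hc : ∀ j, ∃ x ∈ e, c x = j) :
    HasRegularSubgraph (insert e (univ.image (starEdge v e g c))) r := by
  have hinj := starEdge_injective hv hge hc
  have he_notMem : e ∉ univ.image (starEdge v e g c) := by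
    simp only [mem_image, mem_univ, true_and, not_exists]
    intro j hj
    exact hv (hj ▸ mem_starEdge.2 (Or.inl rfl))
  refine ⟨_, Subset.rfl, insert_nonempty _ _, fun w hw => ?_⟩
  rw [filter_insert, filter_image]
  by_cases hwe : w ∈ e
  · have hedges : ({j | w ∈ starEdge v e g c j} : Finset (Fin r)) = univ.erase (c w) := by
      ext j
      have hwv : w ≠ v := fun h => hv (h ▸ hwe)
      have hwg : w ∉ g := fun h => disjoint_left.1 hge h hwe
      simp [mem_starEdge, hwv, hwg, hwe, eq_comm]
    have he_notMem' : e ∉ image (starEdge v e g c) {j | w ∈ starEdge v e g c j} :=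
      fun h => he_notMem (image_subset_image (subset_univ _) h)
    rw [if_pos hwe, card_insert_of_notMem he_notMem', hedges, card_image_of_injective _ hinj,
      card_erase_of_mem (mem_univ _), card_univ, Fintype.card_fin, Nat.sub_add_cancel (Fin.pos (c w))]
  · have hedges : ({j | w ∈ starEdge v e g c j} : Finset (Fin r)) = univ := by
      obtain ⟨s, hs, hws⟩ := mem_biUnion.1 hw
      obtain ⟨i, -, rfl⟩ :=
        mem_image.1 ((mem_insert.1 hs).resolve_left fun h => hwe (h ▸ hws))
      have hwvg : w = v ∨ w ∈ g := by
        rcases mem_starEdge.1 hws with h | h | h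
        exacts [.inl h, absurd h.1 hwe, .inr h]
      refine eq_univ_of_forall fun j => mem_filter.2 ⟨mem_univ _, mem_starEdge.2 ?_⟩
      rcases hwvg with h | h
      exacts [.inl h, .inr (.inr h)]
    rw [if_neg hwe, hedges, card_image_of_injective _ hinj, card_univ, Fintype.card_fin]

end

/-- If r ≥ 2 divides k, then the full k-star with center v on
n ≥ k + k/r vertices, together with any k-set e not containing v, contains an
r-regular subgraph. -/
theorem stmt_10 {α : Type*} [Fintype α] [DecidableEq α] (k r : ℕ) (hr : 2 ≤ r)
    (hk : 0 < k) (hdvd : r ∣ k) (v : α) (hn : k + k / r ≤ Fintype.card α)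
    (e : Finset α) (he : e.card = k) (hv : v ∉ e) :
    HasRegularSubgraph
      (((Finset.univ.powersetCard k).filter (fun s => v ∈ s)) ∪ {e}) r := by
  obtain ⟨m, rfl⟩ := hdvd
  have hm : 0 < m := Nat.pos_of_mul_pos_left hk
  rw [Nat.mul_div_cancel_left m (by omega)] at hn
  obtain ⟨c, hc⟩ := e.exists_fiber_card_eq (by omega) he
  have hroom : m - 1 ≤ #(univ \ insert v e) := by
    rw [card_univ_sdiff, card_insert_of_notMem hv, he]
    omega
  obtain ⟨g, hg, hgm⟩ := exists_subset_card_eq hroom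
  have hvg : v ∉ g := fun h => (mem_sdiff.1 (hg h)).2 (mem_insert_self v e)
  have hge : Disjoint g e :=
    disjoint_left.2 fun x hx hxe => (mem_sdiff.1 (hg hx)).2 (mem_insert_of_mem hxe)
  have hsurj : ∀ j, ∃ x ∈ e, c x = j := fun j => by
    obtain ⟨x, hx⟩ := card_pos.1 ((hc j).symm ▸ hm)
    exact ⟨x, (mem_filter.1 hx).1, (mem_filter.1 hx).2⟩
  refine (hasRegularSubgraph_starEdges hv hge hsurj).mono (insert_subset ?_ ?_)
  · exact mem_union_right _ (mem_singleton_self e)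
  · refine image_subset_iff.2 fun j _ => mem_union_left _ (mem_filter.2 ⟨?_, ?_⟩)
    · rw [mem_powersetCard, card_starEdge hv hvg hge, he, hc, hgm]
      refine ⟨subset_univ _, ?_⟩
      have : m ≤ r * m := Nat.le_mul_of_pos_left m (by omega)
      omega
    · exact mem_starEdge.2 (.inl rfl)
end

section
/- Let k = k'·d and r = r'·d be positive integers with k' ≥ 3, r' ≥ 3 (note gcd requirement below), where gcd(k', r') = 1. Let H' be a (k-1)-uniform hypergraph on n-2 vertices containing no r' edges spanning at most 2k-2 vertices. Let x, y be two new vertices, and define the k-uniform hypergraph H on V(H') ∪ {x, y} with edge set {e : |e| = k, x ∈ e} ∪ {e ∪ {y} : e ∈ E(H')}. Then H contains no r-regular subgraph. -/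
open Finset

section

variable {α : Type*} [DecidableEq α] {R : Finset (Finset α)} {k r : ℕ}

theorem card_mul_eq_card_biUnion_mul (hunif : ∀ e ∈ R, e.card = k)
    (hreg : ∀ v ∈ R.biUnion id, (R.filter (v ∈ ·)).card = r) :
    R.card * k = (R.biUnion id).card * r := by
  refine card_mul_eq_card_mul (fun e v => v ∈ e) (fun e he => ?_) hreg
  rw [← hunif e he]
  exact congrArg card (filter_mem_eq_inter.trans
    (inter_eq_right.mpr (subset_biUnion_of_mem id he)))

theorem card_filter_mem_eq_zero_or_eq (hreg : ∀ v ∈ R.biUnion id, (R.filter (v ∈ ·)).card = r)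
    (v : α) : (R.filter (v ∈ ·)).card = 0 ∨ (R.filter (v ∈ ·)).card = r := by
  by_cases hv : v ∈ R.biUnion id
  · exact Or.inr (hreg v hv)
  · refine Or.inl (card_eq_zero.mpr (filter_eq_empty_iff.mpr fun e he hve => hv ?_))
    exact mem_biUnion.mpr ⟨e, he, hve⟩

theorem eq_one_of_forall_mem (hunif : ∀ e ∈ R, e.card = k)
    (hreg : ∀ v ∈ R.biUnion id, (R.filter (v ∈ ·)).card = r) (hR : R.Nonempty) {x : α}
    (hx : ∀ e ∈ R, x ∈ e) : r = 1 := by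
  obtain ⟨e₀, he₀⟩ := hR
  have hRr : R.card = r := by
    rw [← hreg x (mem_biUnion.mpr ⟨e₀, he₀, hx e₀ he₀⟩), filter_true_of_mem hx]
  have hr : 0 < r := hRr ▸ card_pos.mpr ⟨e₀, he₀⟩
  have hT : (R.biUnion id).card = k := by
    have := card_mul_eq_card_biUnion_mul hunif hreg
    rw [hRr, mul_comm] at this
    exact (Nat.eq_of_mul_eq_mul_right hr this).symm
  have hR1 : R.card ≤ 1 := card_le_one.mpr fun a ha b hb => by
    have hspan : ∀ e ∈ R, e = R.biUnion id := fun e he =>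
      eq_of_subset_of_card_le (subset_biUnion_of_mem id he) (by rw [hT, hunif e he])
    rw [hspan a ha, hspan b hb]
  omega

-- The degrees of the vertices of `X` add up to at least `#R`, and `#R * k = #span * r`.
theorem card_biUnion_sdiff_le (hunif : ∀ e ∈ R, e.card = k)
    (hreg : ∀ v ∈ R.biUnion id, (R.filter (v ∈ ·)).card = r) (hr : 0 < r) {X : Finset α}
    (hX : ∀ e ∈ R, ∃ v ∈ X, v ∈ e) : ((R.biUnion id) \ X).card ≤ (k - 1) * X.card := by
  set T := R.biUnion id
  have hR : R.card ≤ (X ∩ T).card * r := by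
    calc R.card ≤ ((X ∩ T).biUnion fun v => R.filter (v ∈ ·)).card := by
          refine card_le_card fun e he => ?_
          obtain ⟨v, hvX, hve⟩ := hX e he
          exact mem_biUnion.mpr ⟨v, mem_inter.mpr ⟨hvX, mem_biUnion.mpr ⟨e, he, hve⟩⟩,
            mem_filter.mpr ⟨he, hve⟩⟩
      _ ≤ ∑ v ∈ X ∩ T, (R.filter (v ∈ ·)).card := card_biUnion_le
      _ = (X ∩ T).card * r := by
          rw [sum_congr rfl fun v hv => hreg v (mem_inter.mp hv).2, sum_const, smul_eq_mul]
  have hT : T.card ≤ k * (X ∩ T).card := by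
    refine Nat.le_of_mul_le_mul_right ?_ hr
    calc T.card * r = R.card * k := (card_mul_eq_card_biUnion_mul hunif hreg).symm
      _ ≤ (X ∩ T).card * r * k := Nat.mul_le_mul_right k hR
      _ = k * (X ∩ T).card * r := by ring
  calc (T \ X).card = T.card - (X ∩ T).card := card_sdiff
    _ ≤ (k - 1) * (X ∩ T).card := by rw [Nat.sub_one_mul]; omega
    _ ≤ (k - 1) * X.card := Nat.mul_le_mul_left _ (card_le_card inter_subset_left)

theorem dvd_of_add_mul_eq_mul {k' r' d a b t : ℕ} (hd : 0 < d) (hcop : Nat.Coprime k' r')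
    (ha : r' ∣ a) (h : (a + b) * (k' * d) = t * (r' * d)) : r' ∣ b := by
  have h' : a * k' + b * k' = t * r' :=
    Nat.eq_of_mul_eq_mul_right hd (by rw [← add_mul]; linarith [h])
  have hbk : r' ∣ b * k' := (Nat.dvd_add_right (ha.mul_right k')).mp (h' ▸ dvd_mul_left r' t)
  exact hcop.symm.dvd_of_dvd_mul_right hbk

theorem biUnion_filter_insert_mem_subset {x y : α} {H' : Finset (Finset α)}
    (hx : ∀ e ∈ H', x ∉ e) (hy : ∀ e ∈ H', y ∉ e) :
    (H'.filter (insert y · ∈ R)).biUnion id ⊆ R.biUnion id \ {x, y} := by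
  intro v hv
  obtain ⟨e, he, hve⟩ := mem_biUnion.mp hv
  rw [mem_filter] at he
  refine mem_sdiff.mpr ⟨mem_biUnion.mpr ⟨_, he.2, mem_insert_of_mem hve⟩, ?_⟩
  rw [mem_insert, mem_singleton]
  rintro (rfl | rfl)
  exacts [hx e he.1 hve, hy e he.1 hve]

section apexHypergraph

variable [Fintype α] {x y : α} {H' : Finset (Finset α)}

def apexHypergraph (k : ℕ) (x y : α) (H' : Finset (Finset α)) : Finset (Finset α) :=
  ((univ.powersetCard k).filter (fun s => x ∈ s)) ∪ H'.image (insert y)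

theorem mem_apexHypergraph {e : Finset α} :
    e ∈ apexHypergraph k x y H' ↔ (e.card = k ∧ x ∈ e) ∨ ∃ e' ∈ H', insert y e' = e := by
  simp [apexHypergraph]

theorem card_of_mem_apexHypergraph (hk : 1 ≤ k) (hunif : ∀ e ∈ H', e.card = k - 1)
    (hy : ∀ e ∈ H', y ∉ e) {e : Finset α} (he : e ∈ apexHypergraph k x y H') : e.card = k := by
  rcases mem_apexHypergraph.mp he with ⟨hcard, -⟩ | ⟨e', he', rfl⟩
  · exact hcard
  · rw [card_insert_of_notMem (hy e' he'), hunif e' he']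
    omega

theorem exists_mem_pair_of_mem_apexHypergraph {e : Finset α} (he : e ∈ apexHypergraph k x y H') :
    ∃ v ∈ ({x, y} : Finset α), v ∈ e := by
  rcases mem_apexHypergraph.mp he with ⟨-, hx⟩ | ⟨e', -, rfl⟩
  · exact ⟨x, mem_insert_self x _, hx⟩
  · exact ⟨y, mem_insert_of_mem (mem_singleton_self y), mem_insert_self y e'⟩

theorem filter_notMem_eq_image_insert (hxy : x ≠ y) (hx : ∀ e ∈ H', x ∉ e)
    (hR : R ⊆ apexHypergraph k x y H') :
    R.filter (x ∉ ·) = (H'.filter (insert y · ∈ R)).image (insert y) := by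
  ext e
  simp only [mem_filter, mem_image]
  constructor
  · rintro ⟨heR, hxe⟩
    rcases mem_apexHypergraph.mp (hR heR) with ⟨-, hxe'⟩ | ⟨e', he', rfl⟩
    · exact absurd hxe' hxe
    · exact ⟨e', ⟨he', heR⟩, rfl⟩
  · rintro ⟨e', ⟨he', heR⟩, rfl⟩
    simpa [hxy] using And.intro heR (hx e' he')

theorem card_eq_card_filter_mem_add (hxy : x ≠ y) (hx : ∀ e ∈ H', x ∉ e) (hy : ∀ e ∈ H', y ∉ e)
    (hR : R ⊆ apexHypergraph k x y H') :
    R.card = (R.filter (x ∈ ·)).card + (H'.filter (insert y · ∈ R)).card := by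
  have hinj : Set.InjOn (insert y) (H'.filter (insert y · ∈ R) : Set (Finset α)) :=
    fun e₁ h₁ e₂ h₂ h => by
      rw [← erase_insert (hy e₁ (mem_filter.mp h₁).1), ← erase_insert (hy e₂ (mem_filter.mp h₂).1),
        h]
  rw [← card_filter_add_card_filter_not (x ∈ ·), filter_notMem_eq_image_insert hxy hx hR,
    card_image_of_injOn hinj]

end apexHypergraph

end

/-- Let k = k'·d, r = r'·d with k', r' ≥ 3 and gcd(k', r') = 1. Let H' be a
(k-1)-uniform hypergraph avoiding two new vertices x, y, with no r' edges spanning at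
most 2k-2 vertices. Then the hypergraph consisting of all k-sets containing x together
with the sets e ∪ {y}, e ∈ H', has no r-regular subgraph. -/
theorem stmt_12 {α : Type*} [Fintype α] [DecidableEq α] (k r k' r' d : ℕ)
    (hd : 0 < d) (hk' : 3 ≤ k') (hr' : 3 ≤ r')
    (hk : k = k' * d) (hr : r = r' * d) (hgcd : Nat.gcd k' r' = 1)
    (x y : α) (hxy : x ≠ y)
    (H' : Finset (Finset α)) (hH'unif : ∀ e ∈ H', e.card = k - 1)
    (hH'x : ∀ e ∈ H', x ∉ e) (hH'y : ∀ e ∈ H', y ∉ e)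
    (hspan : ¬ ∃ S ⊆ H', S.card = r' ∧ (S.biUnion id).card ≤ 2 * k - 2) :
    ¬ HasRegularSubgraph
        (((Finset.univ.powersetCard k).filter (fun s => x ∈ s)) ∪
          H'.image (insert y)) r := by
  rintro ⟨R, hRH, hRne, hreg⟩
  change R ⊆ apexHypergraph k x y H' at hRH
  have hk1 : 1 ≤ k := hk ▸ Nat.mul_pos (by omega) hd
  have hr2 : 2 ≤ r := by have := Nat.mul_le_mul hr' hd; omega
  have hunif : ∀ e ∈ R, e.card = k := fun e he =>
    card_of_mem_apexHypergraph hk1 hH'unif hH'y (hRH he)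
  have hRcard := card_eq_card_filter_mem_add hxy hH'x hH'y hRH
  set S := H'.filter (insert y · ∈ R)
  have hSne : S.Nonempty := by
    refine nonempty_iff_ne_empty.mpr fun hS => (by omega : r ≠ 1) ?_
    refine eq_one_of_forall_mem hunif hreg hRne (x := x) (filter_eq_self.mp ?_)
    exact eq_of_subset_of_card_le (filter_subset _ _) (by rw [hRcard, hS, card_empty, add_zero])
  have hdvd : r' ∣ S.card := by
    have hcount := card_mul_eq_card_biUnion_mul hunif hreg
    rw [hRcard, hk, hr] at hcount
    refine dvd_of_add_mul_eq_mul hd hgcd ?_ hcount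
    rcases card_filter_mem_eq_zero_or_eq hreg x with h | h <;> rw [h]
    exacts [dvd_zero r', hr ▸ dvd_mul_right r' d]
  have hspanS : (S.biUnion id).card ≤ 2 * k - 2 :=
    calc (S.biUnion id).card ≤ (R.biUnion id \ {x, y}).card :=
          card_le_card (biUnion_filter_insert_mem_subset hH'x hH'y)
      _ ≤ (k - 1) * ({x, y} : Finset α).card := card_biUnion_sdiff_le hunif hreg (by omega)
          fun e he => exists_mem_pair_of_mem_apexHypergraph (hRH he)
      _ ≤ 2 * k - 2 := (Nat.mul_le_mul_left _ card_le_two).trans (by omega)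
  obtain ⟨S₀, hS₀, hS₀card⟩ := exists_subset_card_eq (Nat.le_of_dvd (card_pos.mpr hSne) hdvd)
  exact hspan ⟨S₀, hS₀.trans (filter_subset _ _), hS₀card,
    (card_le_card (biUnion_subset_biUnion_of_subset_left _ hS₀)).trans hspanS⟩
end

section
/- An n-vertex (not necessarily uniform) hypergraph H with no r-regular subgraph has at most 2^{n-1} + r - 2 edges, for any r ≥ 2 and n ≥ 1. -/
lemma pair_filter_card {α : Type*} [Fintype α] [DecidableEq α]
    (G : Finset (Finset α)) (v0 : α) (hv0 : ∀ A ∈ G, v0 ∈ A) (v : α) :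
    ((G ∪ G.image compl).filter (fun e => v ∈ e)).card = G.card := by
  have hdisj : Disjoint G (G.image compl) := by
    rw [Finset.disjoint_left]
    rintro A hA hA'
    obtain ⟨B, hB, rfl⟩ := Finset.mem_image.mp hA'
    exact (Finset.mem_compl.mp (hv0 _ hA)) (hv0 _ hB)
  rw [Finset.filter_union,
    Finset.card_union_of_disjoint
      (hdisj.mono (Finset.filter_subset _ _) (Finset.filter_subset _ _))]
  have himg : (G.image compl).filter (fun e => v ∈ e)
      = (G.filter (fun e => v ∉ e)).image compl := by
    ext A
    simp only [Finset.mem_filter, Finset.mem_image]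
    constructor
    · rintro ⟨⟨B, hB, rfl⟩, hv⟩
      exact ⟨B, ⟨hB, Finset.mem_compl.mp hv⟩, rfl⟩
    · rintro ⟨B, ⟨hB, hv⟩, rfl⟩
      exact ⟨⟨B, hB, rfl⟩, Finset.mem_compl.mpr hv⟩
  rw [himg, Finset.card_image_of_injective _ compl_injective,
    Finset.card_filter_add_card_filter_not]

/-- An n-vertex (not necessarily uniform) hypergraph with no r-regular
subgraph has at most 2^{n-1} + r - 2 edges, for any r ≥ 2 and n ≥ 1. -/
theorem stmt_15 {α : Type*} [Fintype α] [DecidableEq α] (r : ℕ) (hr : 2 ≤ r)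
    (hn : 1 ≤ Fintype.card α)
    (H : Finset (Finset α)) (hne : ∀ e ∈ H, e.Nonempty)
    (hno : ¬ HasRegularSubgraph H r) :
    H.card ≤ 2 ^ (Fintype.card α - 1) + r - 2 := by
  classical
  obtain ⟨v0⟩ : Nonempty α := Fintype.card_pos_iff.mp hn
  set n := Fintype.card α with hn'
  set H' := H.erase Finset.univ with hH'
  set F := H'.filter (fun A => Aᶜ ∈ H') with hF
  set G0 := F.filter (fun A => v0 ∈ A) with hG0
  have hH'sub : H' ⊆ H := Finset.erase_subset _ _
  have hFcompl : ∀ A ∈ F, Aᶜ ∈ F := by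
    intro A hA
    rw [hF, Finset.mem_filter] at hA ⊢
    exact ⟨hA.2, by rw [compl_compl]; exact hA.1⟩
  -- |F| = 2 * |G0|
  have hFcard : F.card = 2 * G0.card := by
    have himg : (F.filter (fun A => v0 ∉ A)) = G0.image compl := by
      ext A
      rw [Finset.mem_filter, Finset.mem_image]
      constructor
      · rintro ⟨hA, hv⟩
        refine ⟨Aᶜ, ?_, compl_compl A⟩
        rw [hG0, Finset.mem_filter]
        exact ⟨hFcompl A hA, Finset.mem_compl.mpr hv⟩
      · rintro ⟨B, hB, rfl⟩
        rw [hG0, Finset.mem_filter] at hB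
        exact ⟨hFcompl B hB.1, fun h => Finset.mem_compl.mp h hB.2⟩
    have hsplit : G0.card + (F.filter (fun A => v0 ∉ A)).card = F.card := by
      rw [hG0]
      exact Finset.card_filter_add_card_filter_not _
    rw [himg, Finset.card_image_of_injective _ compl_injective] at hsplit
    omega
  -- counting bound : |H'| ≤ 2^(n-1) - 1 + |G0|
  have hpow : 2 ^ n = 2 * 2 ^ (n - 1) := by
    conv_lhs => rw [show n = (n - 1) + 1 by omega]
    rw [pow_succ]; ring
  have hH'bound : H'.card ≤ 2 ^ (n - 1) - 1 + G0.card := by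
    set C := H'.image compl with hC
    have hCcard : C.card = H'.card := Finset.card_image_of_injective _ compl_injective
    have hmemC : ∀ A : Finset α, A ∈ C ↔ Aᶜ ∈ H' := by
      intro A
      rw [hC, Finset.mem_image]
      constructor
      · rintro ⟨B, hB, rfl⟩; rwa [compl_compl]
      · intro h; exact ⟨Aᶜ, h, compl_compl A⟩
    have hinter : H' ∩ C = F := by
      ext A
      rw [Finset.mem_inter, hmemC, hF, Finset.mem_filter]
    have hsub : H' ∪ C ⊆ ((Finset.univ : Finset (Finset α)).erase Finset.univ).erase ∅ := by
      intro A hA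
      rw [Finset.mem_erase, Finset.mem_erase]
      rcases Finset.mem_union.mp hA with h | h
      · refine ⟨(hne A (hH'sub h)).ne_empty, Finset.ne_of_mem_erase h, Finset.mem_univ _⟩
      · rw [hmemC] at h
        refine ⟨?_, ?_, Finset.mem_univ _⟩
        · intro h0
          apply Finset.ne_of_mem_erase h
          rw [h0, Finset.compl_empty]
        · intro h0
          exact (hne _ (hH'sub h)).ne_empty (by rw [h0, Finset.compl_univ])
    have hU2 : (((Finset.univ : Finset (Finset α)).erase Finset.univ).erase ∅).card
        = 2 ^ n - 2 := by
      have h1 : (Finset.univ : Finset (Finset α)).card = 2 ^ n := by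
        rw [Finset.card_univ, Fintype.card_finset]
      have hne1 : (∅ : Finset α) ≠ Finset.univ := by
        intro h
        have : (Finset.univ : Finset α).Nonempty := ⟨v0, Finset.mem_univ v0⟩
        rw [← h] at this
        exact Finset.not_nonempty_empty this
      rw [Finset.card_erase_of_mem (Finset.mem_erase.mpr ⟨hne1, Finset.mem_univ _⟩),
        Finset.card_erase_of_mem (Finset.mem_univ _), h1]
      omega
    have hcu := Finset.card_union_add_card_inter H' C
    have hle := Finset.card_le_card hsub
    rw [hU2] at hle
    have h2n : 2 ≤ 2 ^ n := by
      calc 2 = 2 ^ 1 := by norm_num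
      _ ≤ 2 ^ n := Nat.pow_le_pow_right (by norm_num) hn
    rw [hinter, hFcard, hCcard] at hcu
    omega
  -- the key construction: extracting a regular subgraph
  have hG0H : ∀ A ∈ G0, A ∈ H ∧ Aᶜ ∈ H ∧ v0 ∈ A ∧ A ≠ Finset.univ := by
    intro A hA
    rw [hG0, Finset.mem_filter, hF, Finset.mem_filter] at hA
    exact ⟨hH'sub hA.1.1, hH'sub hA.1.2, hA.2, Finset.ne_of_mem_erase hA.1.1⟩
  by_cases huniv : Finset.univ ∈ H
  · -- univ ∈ H : at most r - 2 full pairs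
    have hkey : G0.card ≤ r - 2 := by
      by_contra hk
      push_neg at hk
      obtain ⟨G, hGsub, hGcard⟩ := Finset.exists_subset_card_eq (show r - 1 ≤ G0.card by omega)
      apply hno
      refine ⟨insert Finset.univ (G ∪ G.image compl), ?_, ⟨_, Finset.mem_insert_self _ _⟩, ?_⟩
      · intro A hA
        rcases Finset.mem_insert.mp hA with rfl | hA
        · exact huniv
        rcases Finset.mem_union.mp hA with h | h
        · exact (hG0H A (hGsub h)).1
        · obtain ⟨B, hB, rfl⟩ := Finset.mem_image.mp h
          exact (hG0H B (hGsub hB)).2.1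
      · intro v _
        have hnotmem : Finset.univ ∉ G ∪ G.image compl := by
          intro h
          rcases Finset.mem_union.mp h with h | h
          · exact (hG0H _ (hGsub h)).2.2.2 rfl
          · obtain ⟨B, hB, hBc⟩ := Finset.mem_image.mp h
            have : v0 ∈ Bᶜ := hBc ▸ Finset.mem_univ v0
            exact Finset.mem_compl.mp this (hG0H B (hGsub hB)).2.2.1
        rw [Finset.filter_insert, if_pos (Finset.mem_univ v),
          Finset.card_insert_of_notMem (fun h => hnotmem (Finset.mem_filter.mp h).1),
          pair_filter_card G v0 (fun A hA => (hG0H A (hGsub hA)).2.2.1) v, hGcard]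
        omega
    have hHcard : H.card = H'.card + 1 := by
      rw [hH', Finset.card_erase_of_mem huniv]
      have : 1 ≤ H.card := Finset.card_pos.mpr ⟨_, huniv⟩
      omega
    have h1 : 1 ≤ 2 ^ (n - 1) := Nat.one_le_two_pow
    omega
  · -- univ ∉ H : at most r - 1 full pairs
    have hkey : G0.card ≤ r - 1 := by
      by_contra hk
      push_neg at hk
      obtain ⟨G, hGsub, hGcard⟩ := Finset.exists_subset_card_eq (show r ≤ G0.card by omega)
      apply hno
      have hGne : G.Nonempty := Finset.card_pos.mp (by omega)
      refine ⟨G ∪ G.image compl, ?_, hGne.mono Finset.subset_union_left, ?_⟩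
      · intro A hA
        rcases Finset.mem_union.mp hA with h | h
        · exact (hG0H A (hGsub h)).1
        · obtain ⟨B, hB, rfl⟩ := Finset.mem_image.mp h
          exact (hG0H B (hGsub hB)).2.1
      · intro v _
        rw [pair_filter_card G v0 (fun A hA => (hG0H A (hGsub hA)).2.2.1) v, hGcard]
    have hHcard : H.card = H'.card := by
      rw [hH', Finset.erase_eq_of_notMem huniv]
    have h1 : 1 ≤ 2 ^ (n - 1) := Nat.one_le_two_pow
    omega
end

section
/- For every pair of positive integers k and p, every family of more than (p−1)^k · k! distinct k-element sets contains a p-sunflower, i.e., p sets whose pairwise intersections are all equal to the same set. -/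
/-!
Induction on `k`. Take a maximal pairwise disjoint subfamily `M` of `F`. If `#M ≥ p` it contains
a sunflower with empty core. Otherwise the union `Y` of `M` has at most `(p - 1) * k` points and
meets every member of `F`, so some `y ∈ Y` lies in more than `(p - 1) ^ (k - 1) * (k - 1)!`
members of `F`. Removing `y` from these gives a `(k - 1)`-uniform family, whose sunflower
becomes one in `F` after putting `y` back into every petal and into the core.
-/

open Finset

namespace Finset

variable {α : Type*} [DecidableEq α]

def IsSunflower (S : Finset (Finset α)) : Prop :=
  ∃ C : Finset α, ∀ e ∈ S, ∀ f ∈ S, e ≠ f → e ∩ f = C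

theorem isSunflower_of_pairwiseDisjoint {S : Finset (Finset α)}
    (hS : (S : Set (Finset α)).PairwiseDisjoint id) : S.IsSunflower :=
  ⟨∅, fun _ he _ hf hef => disjoint_iff_inter_eq_empty.mp (hS he hf hef)⟩

theorem IsSunflower.image_insert {S : Finset (Finset α)} {a : α} (hS : S.IsSunflower) :
    (S.image (insert a)).IsSunflower := by
  obtain ⟨C, hC⟩ := hS
  refine ⟨insert a C, ?_⟩
  simp only [mem_image]
  rintro _ ⟨e, he, rfl⟩ _ ⟨f, hf, rfl⟩ hef
  rw [← insert_inter_distrib, hC e he f hf (fun h => hef (h ▸ rfl))]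

theorem card_image_insert_of_forall_notMem {S : Finset (Finset α)} {a : α}
    (ha : ∀ s ∈ S, a ∉ s) : #(S.image (insert a)) = #S :=
  card_image_of_injOn <| insert_erase_invOn.2.injOn.mono ha

theorem card_memberSubfamily (a : α) (𝒜 : Finset (Finset α)) :
    #(𝒜.memberSubfamily a) = #{s ∈ 𝒜 | a ∈ s} := by
  rw [← image_insert_memberSubfamily, card_image_insert_of_forall_notMem]
  exact fun s hs => (mem_memberSubfamily.mp hs).2

theorem sized_memberSubfamily {𝒜 : Finset (Finset α)} {k : ℕ} (a : α)
    (h𝒜 : (𝒜 : Set (Finset α)).Sized (k + 1)) :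
    (𝒜.memberSubfamily a : Set (Finset α)).Sized k := by
  intro s hs
  obtain ⟨hs𝒜, has⟩ := mem_memberSubfamily.mp hs
  simpa [card_insert_of_notMem has] using h𝒜 hs𝒜

theorem exists_maximal_pairwiseDisjoint_subset (F : Finset (Finset α)) :
    ∃ M ⊆ F, (M : Set (Finset α)).PairwiseDisjoint id ∧
      ∀ e ∈ F, e.Nonempty → ∃ m ∈ M, ¬Disjoint e m := by
  classical
  set D := F.powerset.filter fun M : Finset (Finset α) => (M : Set (Finset α)).PairwiseDisjoint id
  obtain ⟨M, hM, hmax⟩ := exists_max_image D card ⟨∅, by simp [D]⟩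
  obtain ⟨hMF, hMdisj⟩ := mem_filter.mp hM
  refine ⟨M, mem_powerset.mp hMF, hMdisj, fun e he hne => ?_⟩
  by_contra! hdisj
  have heM : e ∉ M := fun heM => not_disjoint_iff_nonempty_inter.mpr (by simpa) (hdisj e heM)
  have hins : insert e M ∈ D := by
    simp only [D, mem_filter, mem_powerset, coe_insert]
    exact ⟨insert_subset he (mem_powerset.mp hMF), hMdisj.insert fun m hm _ => hdisj m hm⟩
  have := hmax _ hins
  rw [card_insert_of_notMem heM] at this
  omega

theorem exists_pairwiseDisjoint_or_exists_cover {F : Finset (Finset α)} {k : ℕ}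
    (hF : (F : Set (Finset α)).Sized k) (p : ℕ) :
    (∃ S ⊆ F, #S = p ∧ (S : Set (Finset α)).PairwiseDisjoint id) ∨
      ∃ Y : Finset α, #Y ≤ (p - 1) * k ∧ ∀ e ∈ F, e.Nonempty → ∃ y ∈ Y, y ∈ e := by
  obtain ⟨M, hMF, hMdisj, hmax⟩ := exists_maximal_pairwiseDisjoint_subset F
  by_cases hpM : p ≤ #M
  · obtain ⟨S, hSM, hS⟩ := exists_subset_card_eq hpM
    exact Or.inl ⟨S, hSM.trans hMF, hS, hMdisj.subset (by simpa using hSM)⟩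
  refine Or.inr ⟨M.biUnion id, ?_, fun e he hne => ?_⟩
  · calc #(M.biUnion id) ≤ #M * k := card_biUnion_le_card_mul _ _ _ fun m hm => (hF (hMF hm)).le
      _ ≤ (p - 1) * k := Nat.mul_le_mul_right _ (by omega)
  · obtain ⟨m, hm, hem⟩ := hmax e he hne
    obtain ⟨y, hye, hym⟩ := not_disjoint_iff.mp hem
    exact ⟨y, mem_biUnion.mpr ⟨m, hm, hym⟩, hye⟩

theorem exists_lt_card_filter_mem_of_mul_lt_card {F : Finset (Finset α)} {Y : Finset α}
    {n : ℕ} (hY : ∀ e ∈ F, ∃ y ∈ Y, y ∈ e) (hF : #Y * n < #F) :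
    ∃ y ∈ Y, n < #{e ∈ F | y ∈ e} := by
  refine exists_lt_of_sum_lt ?_
  calc ∑ _ ∈ Y, n = #Y * n := by rw [sum_const, smul_eq_mul]
    _ < #F := hF
    _ ≤ #(Y.biUnion fun y => {e ∈ F | y ∈ e}) := card_le_card fun e he => by
        obtain ⟨y, hy, hye⟩ := hY e he
        exact mem_biUnion.mpr ⟨y, hy, mem_filter.mpr ⟨he, hye⟩⟩
    _ ≤ ∑ y ∈ Y, #{e ∈ F | y ∈ e} := card_biUnion_le

theorem exists_isSunflower_of_sized {k p : ℕ} {F : Finset (Finset α)}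
    (hF : (F : Set (Finset α)).Sized k) (hcard : (p - 1) ^ k * k.factorial < #F) :
    ∃ S ⊆ F, #S = p ∧ S.IsSunflower := by
  induction k generalizing F with
  | zero =>
    have : #F ≤ 1 := card_le_one.mpr fun e he f hf => by
      rw [card_eq_zero.mp (hF he), card_eq_zero.mp (hF hf)]
    simp only [pow_zero, Nat.factorial_zero, one_mul] at hcard
    omega
  | succ k ih =>
    obtain ⟨S, hSF, hS, hSdisj⟩ | ⟨Y, hY, hYF⟩ := exists_pairwiseDisjoint_or_exists_cover hF p
    · exact ⟨S, hSF, hS, isSunflower_of_pairwiseDisjoint hSdisj⟩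
    have hYF' : ∀ e ∈ F, ∃ y ∈ Y, y ∈ e := fun e he =>
      hYF e he (card_pos.mp (by rw [hF he]; omega))
    have hmul : #Y * ((p - 1) ^ k * k.factorial) < #F :=
      calc #Y * ((p - 1) ^ k * k.factorial)
          ≤ (p - 1) * (k + 1) * ((p - 1) ^ k * k.factorial) := Nat.mul_le_mul_right _ hY
        _ = (p - 1) ^ (k + 1) * (k + 1).factorial := by rw [pow_succ, Nat.factorial_succ]; ring
        _ < #F := hcard
    obtain ⟨y, -, hy⟩ := exists_lt_card_filter_mem_of_mul_lt_card hYF' hmul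
    rw [← card_memberSubfamily] at hy
    obtain ⟨S, hSF, hS, hSsun⟩ := ih (sized_memberSubfamily y hF) hy
    have hyS : ∀ s ∈ S, y ∉ s := fun s hs => (mem_memberSubfamily.mp (hSF hs)).2
    refine ⟨S.image (insert y), ?_, by rw [card_image_insert_of_forall_notMem hyS, hS],
      hSsun.image_insert⟩
    calc S.image (insert y) ⊆ (F.memberSubfamily y).image (insert y) := image_subset_image hSF
      _ = {e ∈ F | y ∈ e} := image_insert_memberSubfamily F y
      _ ⊆ F := filter_subset _ _

end Finset

theorem stmt_17_general {α : Type*} [DecidableEq α] (k p : ℕ)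
    (F : Finset (Finset α)) (hunif : ∀ e ∈ F, e.card = k)
    (hcard : (p - 1) ^ k * Nat.factorial k < F.card) :
    ∃ S ⊆ F, S.card = p ∧ ∃ C : Finset α,
      ∀ e ∈ S, ∀ f ∈ S, e ≠ f → e ∩ f = C :=
  exists_isSunflower_of_sized hunif hcard

/-- Erdős–Rado sunflower lemma: For positive integers k and p, every
family of more than (p−1)^k·k! distinct k-element sets contains a p-sunflower: p sets
whose pairwise intersections all equal the same core. -/
theorem stmt_17 {α : Type*} [DecidableEq α] (k p : ℕ) (hk : 0 < k) (hp : 0 < p)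
    (F : Finset (Finset α)) (hunif : ∀ e ∈ F, e.card = k)
    (hcard : (p - 1) ^ k * Nat.factorial k < F.card) :
    ∃ S ⊆ F, S.card = p ∧ ∃ C : Finset α,
      ∀ e ∈ S, ∀ f ∈ S, e ≠ f → e ∩ f = C :=
  stmt_17_general k p F hunif hcard
end

section
/- Suppose M₁, …, M_q are distinct matchings of size m in a k-uniform hypergraph H, all covering exactly the same vertex set, and suppose r of them, M_{i₁}, …, M_{i_r}, form an r-sunflower when viewed as edges of an auxiliary hypergraph on vertex set E(H) (i.e., there is a common set M' of edges with M_{i_j} ∩ M_{i_{j'}} = M' for all j ≠ j'). Then the edges in ∪_{j=1}^r (M_{i_j} \ M') form an r-regular subgraph of H. -/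
/-- If M₁, …, M_r are distinct matchings of size m in H covering the same
vertex set U, forming an r-sunflower with common core M' (a set of edges), then the
edges in ∪_j (M_j \ M') form an r-regular subgraph of H. -/
theorem stmt_18 {α : Type*} [DecidableEq α] (m r : ℕ) (hr : 2 ≤ r)
    (H : Finset (Finset α)) (M : Fin r → Finset (Finset α))
    (hinj : Function.Injective M)
    (hsub : ∀ j, M j ⊆ H) (hsize : ∀ j, (M j).card = m)
    (hmatch : ∀ j, (↑(M j) : Set (Finset α)).Pairwise Disjoint)
    (U : Finset α) (hU : ∀ j, (M j).biUnion id = U)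
    (M' : Finset (Finset α)) (hcore : ∀ j j', j ≠ j' → M j ∩ M j' = M') :
    ((Finset.univ.biUnion M) \ M') ⊆ H ∧
    ((Finset.univ.biUnion M) \ M').Nonempty ∧
    ∀ v ∈ ((Finset.univ.biUnion M) \ M').biUnion id,
      (((Finset.univ.biUnion M) \ M').filter (fun e => v ∈ e)).card = r := by
  have h1r : (1 : ℕ) < r := hr
  have h0r : (0 : ℕ) < r := by omega
  set z : Fin r := ⟨0, h0r⟩ with hz
  set o : Fin r := ⟨1, h1r⟩ with ho
  have h01 : z ≠ o := by
    intro h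
    have := congrArg Fin.val h
    simp [hz, ho] at this
  have hM'sub : ∀ j, M' ⊆ M j := by
    intro j
    by_cases h : j = z
    · subst h
      rw [← hcore z o h01]
      exact Finset.inter_subset_left
    · rw [← hcore j z h]
      exact Finset.inter_subset_left
  refine ⟨?_, ?_, ?_⟩
  · intro e he
    obtain ⟨he1, _⟩ := Finset.mem_sdiff.1 he
    obtain ⟨j, _, hej⟩ := Finset.mem_biUnion.1 he1
    exact hsub j hej
  · rw [Finset.nonempty_iff_ne_empty]
    intro h
    have hsub' : Finset.univ.biUnion M ⊆ M' := Finset.sdiff_eq_empty_iff_subset.1 h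
    have h0 : M z = M' :=
      Finset.Subset.antisymm
        (fun e he => hsub' (Finset.mem_biUnion.2 ⟨z, Finset.mem_univ _, he⟩)) (hM'sub z)
    have h1 : M o = M' :=
      Finset.Subset.antisymm
        (fun e he => hsub' (Finset.mem_biUnion.2 ⟨_, Finset.mem_univ _, he⟩)) (hM'sub _)
    exact h01 (hinj (h0.trans h1.symm))
  · intro v hv
    obtain ⟨e0, he0, hve0⟩ := Finset.mem_biUnion.1 hv
    obtain ⟨he0', he0M'⟩ := Finset.mem_sdiff.1 he0
    obtain ⟨j0, _, he0j0⟩ := Finset.mem_biUnion.1 he0'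
    have hvU : v ∈ U := by
      rw [← hU j0]
      exact Finset.mem_biUnion.2 ⟨e0, he0j0, hve0⟩
    have key : ∀ j, ∃ e, ((M j \ M').filter (fun e => v ∈ e)) = {e} := by
      intro j
      have hv' : v ∈ (M j).biUnion id := by rw [hU j]; exact hvU
      obtain ⟨e, hej, hve⟩ := Finset.mem_biUnion.1 hv'
      refine ⟨e, ?_⟩
      have heM' : e ∉ M' := by
        intro hmem
        have hej0 : e ∈ M j0 := hM'sub j0 hmem
        have hne : e ≠ e0 := fun h => he0M' (h ▸ hmem)
        exact Finset.disjoint_left.1 (hmatch j0 hej0 he0j0 hne) hve hve0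
      ext f
      simp only [Finset.mem_filter, Finset.mem_sdiff, Finset.mem_singleton]
      constructor
      · rintro ⟨⟨hfj, _⟩, hvf⟩
        by_contra hne
        exact Finset.disjoint_left.1 (hmatch j hfj hej hne) hvf hve
      · rintro rfl
        exact ⟨⟨hej, heM'⟩, hve⟩
    have hsplit : (Finset.univ.biUnion M \ M').filter (fun e => v ∈ e)
        = Finset.univ.biUnion (fun j => (M j \ M').filter (fun e => v ∈ e)) := by
      ext e
      simp only [Finset.mem_filter, Finset.mem_sdiff, Finset.mem_biUnion, Finset.mem_univ,
        true_and]
      tauto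
    rw [hsplit, Finset.card_biUnion]
    · have hone : ∀ j ∈ Finset.univ, ((M j \ M').filter (fun e => v ∈ e)).card = 1 := by
        intro j _
        obtain ⟨e, he⟩ := key j
        rw [he, Finset.card_singleton]
      rw [Finset.sum_congr rfl hone]
      simp
    · intro j _ j' _ hjj'
      refine Finset.disjoint_left.2 fun e he he' => ?_
      simp only [Finset.mem_filter, Finset.mem_sdiff] at he he'
      exact he.1.2 (by rw [← hcore j j' hjj']; exact Finset.mem_inter.2 ⟨he.1.1, he'.1.1⟩)
end
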